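/- arXiv:2510.12808 — 3 statements merged into one kernel-verified Lean document; each statement's English description precedes it below -/
import Mathlib

section
/- Let X be closed in a metrizable space M, and Y closed and homotopy negligible in an absolute retract (absolute extensor) N. Then every continuous map f : X → Y extends to a continuous map f̄ : M → N with f̄⁻¹(Y) = X. -/
/-!
Extend `f` to some `g₀ : M → N` using that `N` is an absolute extensor, then push `g₀ m` off `Y`
by running the negligibility homotopy for time `τ m`, where `τ : M → [0,1]` has zero set exactly
`X` (metric spaces are perfectly normal). On `X` nothing moves, and off `X` the homotopy has
left `Y`.
-/

universe u

/-- `N` is an absolute extensor for metrizable spaces: every continuous map from a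
closed subset of a metrizable space into `N` extends continuously to the whole space. -/
def IsAbsoluteExtensor (N : Type u) [TopologicalSpace N] : Prop :=
  ∀ (Z : Type u) [MetricSpace Z] (A : Set Z), IsClosed A →
    ∀ f : A → N, Continuous f → ∃ g : Z → N, Continuous g ∧ ∀ a : A, g a = f a

open Set

theorem exists_continuous_unitInterval_preimage_zero {X : Type*} [TopologicalSpace X]
    [PerfectlyNormalSpace X] {s : Set X} (hs : IsClosed s) :
    ∃ τ : X → unitInterval, Continuous τ ∧ τ ⁻¹' {0} = s := by
  obtain ⟨f, rfl, hf⟩ := perfectlyNormalSpace_iff_forall_isClosed_preimage_zero.mp ‹_› s hs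
  refine ⟨fun x => ⟨f x, hf x⟩, by fun_prop, ?_⟩
  ext x
  simp [← Subtype.coe_inj]

theorem preimage_homotopy_eval_eq {α β : Type*} {H : β × unitInterval → β}
    (hH0 : ∀ b, H (b, 0) = b) {Y : Set β} (hHneg : ∀ b t, t ≠ 0 → H (b, t) ∉ Y)
    {g : α → β} {τ : α → unitInterval} {s : Set α} (hg : MapsTo g s Y) (hτ : τ ⁻¹' {0} = s) :
    (fun a => H (g a, τ a)) ⁻¹' Y = s := by
  ext a
  by_cases ha : τ a = 0
  · have has : a ∈ s := hτ ▸ ha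
    simpa only [mem_preimage, ha, hH0, has, iff_true] using hg has
  · have has : a ∉ s := hτ ▸ ha
    simpa [has] using hHneg (g a) (τ a) ha

theorem stmt6_general {M N : Type u} [MetricSpace M] [MetricSpace N]
    (hN : IsAbsoluteExtensor N)
    (X : Set M) (hX : IsClosed X) (Y : Set N)
    (H : N × unitInterval → N) (hHc : Continuous H) (hH0 : ∀ n, H (n, 0) = n)
    (hHneg : ∀ n t, t ≠ 0 → H (n, t) ∉ Y)
    (f : X → Y) (hf : Continuous f) :
    ∃ g : M → N, Continuous g ∧ (∀ x : X, g x = f x) ∧ g ⁻¹' Y = X := by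
  obtain ⟨g₀, hg₀c, hg₀⟩ := hN M X hX (fun x => (f x : N)) (by fun_prop)
  obtain ⟨τ, hτc, hτ⟩ := exists_continuous_unitInterval_preimage_zero hX
  have hτX (x : X) : τ x = 0 := (hτ ▸ x.2 : (x : M) ∈ τ ⁻¹' {0})
  refine ⟨fun m => H (g₀ m, τ m), by fun_prop, fun x => by simp [hτX, hH0, hg₀], ?_⟩
  exact preimage_homotopy_eval_eq hH0 hHneg (fun x hx => by simp [hg₀ ⟨x, hx⟩]) hτ

/-- If `X` is closed in a metrizable space `M` and `Y` is closed and
homotopy negligible in an absolute extensor `N`, then every continuous `f : X → Y`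
extends to a continuous `f̄ : M → N` with `f̄⁻¹(Y) = X`. -/
theorem stmt6 {M N : Type u} [MetricSpace M] [MetricSpace N]
    (hN : IsAbsoluteExtensor N)
    (X : Set M) (hX : IsClosed X) (Y : Set N) (hY : IsClosed Y)
    (H : N × unitInterval → N) (hHc : Continuous H) (hH0 : ∀ n, H (n, 0) = n)
    (hHneg : ∀ n t, t ≠ 0 → H (n, t) ∉ Y)
    (f : X → Y) (hf : Continuous f) :
    ∃ g : M → N, Continuous g ∧ (∀ x : X, g x = f x) ∧ g ⁻¹' Y = X :=
  stmt6_general hN X hX Y H hHc hH0 hHneg f hf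
end

section
/- A noncompact metrizable space X admits an exhaustion function (a continuous u : X → (0,1] with u(xₙ) → 0 for every sequence without accumulation points) if and only if X is locally compact and separable. -/
open Set Filter Topology

/-- An exhaustion function on a metrizable space `X`: a continuous `u : X → (0,1]`
such that `u(xₙ) → 0` for every sequence with no accumulation point in `X`. -/
def ExhaustionFunction {X : Type*} [TopologicalSpace X] (u : X → ℝ) : Prop :=
  Continuous u ∧ (∀ x, u x ∈ Ioc (0:ℝ) 1) ∧
  ∀ s : ℕ → X, (∀ p : X, ¬ MapClusterPt p atTop s) →
    Tendsto (fun n => u (s n)) atTop (𝓝 0)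

/-!
The superlevel sets `{c ≤ u}` (`c > 0`) of an exhaustion function are sequentially compact,
hence compact; they cover `X` and each point has one of them as a neighbourhood, so `X` is
locally compact and σ-compact, hence separable. Conversely, if `X` is locally compact and
σ-compact, Urysohn's lemma gives compactly supported `fₙ : X → [0,1]` with `fₙ = 1` on the
`n`-th set of a compact covering, and `∑ 2^{-(n+1)} fₙ` is an exhaustion function.
-/

section

variable {X : Type*} [TopologicalSpace X]

lemma tendsto_cocompact_of_forall_not_mapClusterPt {ι : Type*} {l : Filter ι} {s : ι → X}
    (h : ∀ p, ¬ MapClusterPt p l s) : Tendsto s l (cocompact X) :=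
  hasBasis_cocompact.tendsto_right_iff.2 fun _K hK => by
    by_contra hfreq
    simp only [mem_compl_iff, not_eventually, not_not] at hfreq
    obtain ⟨p, -, hp⟩ := hK.exists_mapClusterPt_of_frequently hfreq
    exact h p hp

lemma ExhaustionFunction.of_tendsto_cocompact {u : X → ℝ} (hcont : Continuous u)
    (hmem : ∀ x, u x ∈ Ioc (0:ℝ) 1) (hlim : Tendsto u (cocompact X) (𝓝 0)) :
    ExhaustionFunction u :=
  ⟨hcont, hmem, fun _s hs => hlim.comp (tendsto_cocompact_of_forall_not_mapClusterPt hs)⟩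

lemma exhaustionFunction_tsum_geometric {f : ℕ → X → ℝ} (hcont : ∀ n, Continuous (f n))
    (hf : ∀ n x, f n x ∈ Icc (0:ℝ) 1) (hpos : ∀ x, ∃ n, 0 < f n x)
    (hlim : ∀ n, Tendsto (f n) (cocompact X) (𝓝 0)) :
    ExhaustionFunction fun x => ∑' n, (1/2 : ℝ) ^ (n + 1) * f n x := by
  have hw : Summable fun n : ℕ => (1/2 : ℝ) ^ (n + 1) :=
    (summable_nat_add_iff 1).2 summable_geometric_two
  have hw_tsum : ∑' n : ℕ, (1/2 : ℝ) ^ (n + 1) = 1 := by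
    simp_rw [pow_succ]
    rw [tsum_mul_right, tsum_geometric_two]
    norm_num
  have hnonneg : ∀ n x, 0 ≤ (1/2 : ℝ) ^ (n + 1) * f n x :=
    fun n x => mul_nonneg (by positivity) (hf n x).1
  have hle : ∀ n x, (1/2 : ℝ) ^ (n + 1) * f n x ≤ (1/2) ^ (n + 1) :=
    fun n x => mul_le_of_le_one_right (by positivity) (hf n x).2
  have hnorm : ∀ n x, ‖(1/2 : ℝ) ^ (n + 1) * f n x‖ ≤ (1/2) ^ (n + 1) := fun n x => by
    rw [Real.norm_of_nonneg (hnonneg n x)]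
    exact hle n x
  have hsum : ∀ x, Summable fun n => (1/2 : ℝ) ^ (n + 1) * f n x :=
    fun x => hw.of_nonneg_of_le (hnonneg · x) (hle · x)
  refine .of_tendsto_cocompact ?_ (fun x => ⟨?_, ?_⟩) ?_
  · exact continuous_tsum (fun n => continuous_const.mul (hcont n)) hw hnorm
  · obtain ⟨n, hn⟩ := hpos x
    exact (hsum x).tsum_pos (hnonneg · x) n (mul_pos (by positivity) hn)
  · exact ((hsum x).tsum_le_tsum (hle · x) hw).trans_eq hw_tsum
  · simpa using tendsto_tsum_of_dominated_convergence hw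
      (fun n => (hlim n).const_mul ((1/2 : ℝ) ^ (n + 1))) (.of_forall fun x n => hnorm n x)

lemma exists_exhaustionFunction [RegularSpace X] [LocallyCompactSpace X] [SigmaCompactSpace X] :
    ∃ u : X → ℝ, ExhaustionFunction u := by
  have hbump : ∀ n, ∃ f : C(X, ℝ), EqOn f 1 (compactCovering X n) ∧ HasCompactSupport f ∧
      ∀ x, f x ∈ Icc (0:ℝ) 1 := fun n => by
    obtain ⟨f, hf1, -, hfc, hf⟩ :=
      exists_continuous_one_zero_of_isCompact (isCompact_compactCovering X n) isClosed_empty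
        (disjoint_empty _)
    exact ⟨f, hf1, hfc, hf⟩
  choose f hf1 hfc hf using hbump
  refine ⟨_, exhaustionFunction_tsum_geometric (fun n => (f n).continuous) hf (fun x => ?_)
    fun n => (hfc n).is_zero_at_infty⟩
  obtain ⟨n, hn⟩ := exists_mem_compactCovering x
  exact ⟨n, by simp [hf1 n hn]⟩

section PseudoMetrizable

variable [TopologicalSpace.PseudoMetrizableSpace X] {u : X → ℝ}

lemma ExhaustionFunction.isCompact_superlevel (hu : ExhaustionFunction u) {c : ℝ} (hc : 0 < c) :
    IsCompact {x | c ≤ u x} := by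
  refine IsSeqCompact.isCompact fun s hs => ?_
  obtain ⟨p, hp⟩ : ∃ p, MapClusterPt p atTop s := by
    by_contra! h
    exact hc.not_ge (ge_of_tendsto (hu.2.2 s h) (.of_forall hs))
  obtain ⟨φ, hφ, hsφ⟩ := hp.tendsto_subseq
  exact ⟨p, (isClosed_le continuous_const hu.1).mem_of_tendsto hsφ (.of_forall fun n => hs _),
    φ, hφ, hsφ⟩

lemma ExhaustionFunction.locallyCompactSpace (hu : ExhaustionFunction u) :
    LocallyCompactSpace X :=
  have : WeaklyLocallyCompactSpace X := ⟨fun x =>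
    have hx : u x / 2 < u x := half_lt_self (hu.2.1 x).1
    ⟨_, hu.isCompact_superlevel (half_pos (hu.2.1 x).1),
      mem_of_superset ((isOpen_lt continuous_const hu.1).mem_nhds hx)
        fun _ (hy : u x / 2 < _) => hy.le⟩⟩
  WeaklyLocallyCompactSpace.locallyCompactSpace

lemma ExhaustionFunction.sigmaCompactSpace (hu : ExhaustionFunction u) : SigmaCompactSpace X :=
  ⟨⟨fun n : ℕ => {x | 1 / (n + 1 : ℝ) ≤ u x},
    fun _ => hu.isCompact_superlevel Nat.one_div_pos_of_nat,
    iUnion_eq_univ_iff.2 fun x => (exists_nat_one_div_lt (hu.2.1 x).1).imp fun _ => le_of_lt⟩⟩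

end PseudoMetrizable

end

theorem stmt9_general {X : Type*} [MetricSpace X] :
    (∃ u : X → ℝ, ExhaustionFunction u) ↔
      (LocallyCompactSpace X ∧ TopologicalSpace.SeparableSpace X) := by
  constructor
  · rintro ⟨u, hu⟩
    have := hu.sigmaCompactSpace
    exact ⟨hu.locallyCompactSpace, inferInstance⟩
  · rintro ⟨_, _⟩
    have := UniformSpace.secondCountable_of_separable X
    exact exists_exhaustionFunction

/-- A noncompact metrizable space admits an exhaustion function if and
only if it is locally compact and separable. -/
theorem stmt9 {X : Type*} [MetricSpace X] (hnc : ¬ CompactSpace X) :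
    (∃ u : X → ℝ, ExhaustionFunction u) ↔
      (LocallyCompactSpace X ∧ TopologicalSpace.SeparableSpace X) :=
  stmt9_general
end

section
/- Let X be a locally compact metrizable space whose one-point compactification X* is perfectly normal, let u : X* → [0,1] be continuous with u⁻¹(0) = {∞}, and let d be a metric giving the topology of X. Then the function d* defined by d*(∞, x) = u(x), d*(∞,∞) = 0, and d*(x,x') = min{u(x) + u(x'), d(x,x') + |u(x) - u(x')|} for x, x' ∈ X, is a metric on X* that induces the topology of X*. -/
open OnePoint Set

/-- Let `X` be locally compact metrizable with `X*` perfectly normal,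
`u : X* → [0,1]` continuous with `u⁻¹(0) = {∞}`, and `d` a metric for `X`. Then
`d*(∞,x) = u(x)`, `d*(∞,∞) = 0`,
`d*(x,x') = min{u(x)+u(x'), d(x,x') + |u(x)-u(x')|}` is a metric on `X*` inducing
the topology of the one-point compactification. -/
theorem stmt14 {X : Type*} [MetricSpace X] [LocallyCompactSpace X]
    [PerfectlyNormalSpace (OnePoint X)]
    (u : OnePoint X → ℝ) (hu : Continuous u) (hur : ∀ p, u p ∈ Icc (0:ℝ) 1)
    (hu0 : u ⁻¹' {0} = {(∞ : OnePoint X)})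
    (D : OnePoint X → OnePoint X → ℝ)
    (hD1 : D ∞ ∞ = 0)
    (hD2 : ∀ x : X, D (↑x) ∞ = u ↑x ∧ D ∞ (↑x) = u ↑x)
    (hD3 : ∀ x x' : X,
      D (↑x) (↑x') = min (u ↑x + u ↑x') (dist x x' + |u ↑x - u ↑x'|)) :
    (∀ p q, 0 ≤ D p q) ∧ (∀ p q, D p q = 0 ↔ p = q) ∧ (∀ p q, D p q = D q p) ∧
    (∀ p q r, D p r ≤ D p q + D q r) ∧
    (∀ s : Set (OnePoint X), IsOpen s ↔ ∀ p ∈ s, ∃ ε > 0, ∀ q, D p q < ε → q ∈ s) := by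
  have hvpos : ∀ x : X, 0 < u ↑x := by
    intro x
    rcases (hur ↑x).1.lt_or_eq with h | h
    · exact h
    · exfalso
      have hx : (↑x : OnePoint X) ∈ u ⁻¹' {0} := by
        simp [mem_preimage, ← h]
      rw [hu0] at hx
      exact OnePoint.coe_ne_infty x hx
  have hnn : ∀ p, 0 ≤ u p := fun p => (hur p).1
  -- nonnegativity
  have hDnn : ∀ p q, 0 ≤ D p q := by
    intro p q
    induction p using OnePoint.rec with
    | infty =>
      induction q using OnePoint.rec with
      | infty => rw [hD1]
      | coe y => rw [(hD2 y).2]; exact hnn _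
    | coe x =>
      induction q using OnePoint.rec with
      | infty => rw [(hD2 x).1]; exact hnn _
      | coe y =>
        rw [hD3]
        exact le_min (add_nonneg (hnn _) (hnn _)) (add_nonneg dist_nonneg (abs_nonneg _))
  -- identity of indiscernibles
  have hDeq : ∀ p q, D p q = 0 ↔ p = q := by
    intro p q
    induction p using OnePoint.rec with
    | infty =>
      induction q using OnePoint.rec with
      | infty => simp [hD1]
      | coe y =>
        rw [(hD2 y).2]
        constructor
        · intro h; exact absurd h (ne_of_gt (hvpos y))
        · intro h; exact absurd h.symm (OnePoint.coe_ne_infty y)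
    | coe x =>
      induction q using OnePoint.rec with
      | infty =>
        rw [(hD2 x).1]
        constructor
        · intro h; exact absurd h (ne_of_gt (hvpos x))
        · intro h; exact absurd h (OnePoint.coe_ne_infty x)
      | coe y =>
        rw [hD3]
        constructor
        · intro h
          rcases min_eq_iff.mp h with ⟨h1, _⟩ | ⟨h1, _⟩
          · exact absurd h1 (ne_of_gt (by linarith [hvpos x, hvpos y, hnn (↑y : OnePoint X)]))
          · have hd : dist x y = 0 := by
              have := abs_nonneg (u ↑x - u ↑y)
              have := dist_nonneg (x := x) (y := y)
              linarith
            exact congrArg _ (dist_eq_zero.mp hd)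
        · intro h
          have hxy : x = y := OnePoint.coe_injective h
          subst hxy
          simp [min_eq_right, hnn]
  -- symmetry
  have hDsymm : ∀ p q, D p q = D q p := by
    intro p q
    induction p using OnePoint.rec with
    | infty =>
      induction q using OnePoint.rec with
      | infty => rfl
      | coe y => rw [(hD2 y).2, (hD2 y).1]
    | coe x =>
      induction q using OnePoint.rec with
      | infty => rw [(hD2 x).2, (hD2 x).1]
      | coe y => rw [hD3, hD3, dist_comm, abs_sub_comm, add_comm (u ↑x)]
  -- triangle inequality
  have hDtri : ∀ p q r, D p r ≤ D p q + D q r := by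
    have hlb : ∀ x y : X, |u ↑x - u ↑y| ≤ D ↑x ↑y := by
      intro x y
      rw [hD3]
      refine le_min (abs_le.mpr ⟨?_, ?_⟩) (le_add_of_nonneg_left dist_nonneg)
      · have := hnn (↑x : OnePoint X); have := hnn (↑y : OnePoint X); linarith
      · have := hnn (↑x : OnePoint X); have := hnn (↑y : OnePoint X); linarith
    intro p q r
    induction p using OnePoint.rec with
    | infty =>
      induction r using OnePoint.rec with
      | infty => rw [hD1]; exact add_nonneg (hDnn _ _) (hDnn _ _)
      | coe z =>
        induction q using OnePoint.rec with
        | infty => rw [hD1]; linarith [le_refl (D ∞ (↑z : OnePoint X))]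
        | coe y =>
          rw [(hD2 z).2, (hD2 y).2]
          have h1 := hlb y z
          have h2 := neg_abs_le (u ↑y - u ↑z)
          linarith
    | coe x =>
      induction r using OnePoint.rec with
      | infty =>
        induction q using OnePoint.rec with
        | infty => rw [hD1, (hD2 x).1]; linarith [le_refl (u (↑x : OnePoint X))]
        | coe y =>
          rw [(hD2 x).1, (hD2 y).1]
          have h1 := hlb x y
          have h2 := le_abs_self (u ↑x - u ↑y)
          linarith
      | coe z =>
        induction q using OnePoint.rec with
        | infty =>
          rw [(hD2 x).1, (hD2 z).2, hD3]
          exact min_le_left _ _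
        | coe y =>
          rw [hD3 x z, hD3 x y, hD3 y z]
          rcases min_cases (u ↑x + u ↑y) (dist x y + |u ↑x - u ↑y|) with ⟨h1, _⟩ | ⟨h1, _⟩ <;>
            rcases min_cases (u ↑y + u ↑z) (dist y z + |u ↑y - u ↑z|) with ⟨h2, _⟩ | ⟨h2, _⟩ <;>
            rw [h1, h2]
          · have := min_le_left (u ↑x + u ↑z) (dist x z + |u ↑x - u ↑z|)
            have := hnn (↑y : OnePoint X)
            linarith
          · have := min_le_left (u ↑x + u ↑z) (dist x z + |u ↑x - u ↑z|)
            have := neg_abs_le (u ↑y - u ↑z)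
            have := dist_nonneg (x := y) (y := z)
            linarith
          · have := min_le_left (u ↑x + u ↑z) (dist x z + |u ↑x - u ↑z|)
            have := le_abs_self (u ↑x - u ↑y)
            have := dist_nonneg (x := x) (y := y)
            linarith
          · have := min_le_right (u ↑x + u ↑z) (dist x z + |u ↑x - u ↑z|)
            have := dist_triangle x y z
            have := abs_sub_le (u ↑x) (u ↑y) (u ↑z)
            linarith
  refine ⟨hDnn, hDeq, hDsymm, hDtri, ?_⟩
  -- topology
  intro s
  constructor
  · -- open → metric open
    intro hs p hp
    induction p using OnePoint.rec with
    | infty =>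
      obtain ⟨hK, _⟩ := (OnePoint.isOpen_iff_of_mem' hp).mp hs
      set K : Set X := ((↑) ⁻¹' s : Set X)ᶜ with hKdef
      rcases K.eq_empty_or_nonempty with hKe | hKne
      · refine ⟨1, one_pos, ?_⟩
        intro q _
        induction q using OnePoint.rec with
        | infty => exact hp
        | coe y =>
          have : y ∉ K := by rw [hKe]; exact notMem_empty y
          simpa [hKdef] using this
      · obtain ⟨x0, hx0K, hmin⟩ := hK.exists_isMinOn hKne
          ((hu.comp OnePoint.continuous_coe).continuousOn)
        refine ⟨u ↑x0, hvpos x0, ?_⟩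
        intro q hq
        induction q using OnePoint.rec with
        | infty => exact hp
        | coe y =>
          rw [(hD2 y).2] at hq
          by_contra hy
          have hyK : y ∈ K := by simpa [hKdef] using hy
          exact absurd (hmin hyK) (by simpa using not_le.mpr hq)
    | coe x =>
      have hso : IsOpen ((↑) ⁻¹' s : Set X) := hs.preimage OnePoint.continuous_coe
      obtain ⟨δ, hδ, hball⟩ := Metric.isOpen_iff.mp hso x hp
      refine ⟨min δ (u ↑x), lt_min hδ (hvpos x), ?_⟩
      intro q hq
      induction q using OnePoint.rec with
      | infty =>
        rw [(hD2 x).1] at hq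
        exact absurd hq (not_lt.mpr (min_le_right _ _))
      | coe y =>
        rw [hD3] at hq
        have hεx : min δ (u ↑x) ≤ u ↑x := min_le_right _ _
        have hb : dist x y + |u ↑x - u ↑y| < min δ (u ↑x) := by
          rcases lt_min_iff.mp (lt_of_le_of_lt (min_le_min_right _ (le_refl _)) hq) with _
          · rcases (min_lt_iff.mp hq) with h | h
            · exfalso
              have := hnn (↑y : OnePoint X)
              linarith
            · exact h
        have hd : dist x y < δ := by
          have := abs_nonneg (u ↑x - u ↑y)
          have := min_le_left δ (u ↑x)
          linarith
        exact hball (by simpa [Metric.mem_ball, dist_comm] using hd)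
  · -- metric open → open
    intro h
    have hso : IsOpen ((↑) ⁻¹' s : Set X) := by
      rw [Metric.isOpen_iff]
      intro x hx
      obtain ⟨ε, hε, hball⟩ := h ↑x hx
      have hcont : Continuous fun y : X => u ↑y := hu.comp OnePoint.continuous_coe
      obtain ⟨δ, hδ, hδu⟩ := Metric.continuous_iff.mp hcont x (ε / 2) (half_pos hε)
      refine ⟨min δ (ε / 2), lt_min hδ (half_pos hε), ?_⟩
      intro y hy
      rw [Metric.mem_ball] at hy
      have h1 : dist y x < δ := lt_of_lt_of_le hy (min_le_left _ _)
      have h2 : |u ↑y - u ↑x| < ε / 2 := by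
        have := hδu y h1
        rwa [Real.dist_eq] at this
      have hDxy : D ↑x ↑y < ε := by
        rw [hD3]
        have h3 : dist x y + |u ↑x - u ↑y| < ε := by
          rw [dist_comm, abs_sub_comm]
          have := min_le_right δ (ε / 2)
          linarith
        exact lt_of_le_of_lt (min_le_right _ _) h3
      exact hball _ hDxy
    rw [OnePoint.isOpen_def]
    refine ⟨?_, hso⟩
    intro hinf
    obtain ⟨ε, hε, hball⟩ := h ∞ hinf
    have hC : IsCompact (u ⁻¹' Ici ε) := (isClosed_Ici.preimage hu).isCompact
    have hCr : u ⁻¹' Ici ε ⊆ range ((↑) : X → OnePoint X) := by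
      intro p hpC
      induction p using OnePoint.rec with
      | infty =>
        exfalso
        have h0 : u ∞ = 0 := by
          have : (∞ : OnePoint X) ∈ u ⁻¹' {0} := by rw [hu0]; exact rfl
          simpa using this
        rw [mem_preimage, h0] at hpC
        exact absurd hpC (not_le.mpr hε)
      | coe y => exact mem_range_self y
    have hCpre : IsCompact (((↑) : X → OnePoint X) ⁻¹' (u ⁻¹' Ici ε)) := by
      rw [OnePoint.isOpenEmbedding_coe.isEmbedding.isCompact_iff,
        image_preimage_eq_of_subset hCr]
      exact hC
    refine hCpre.of_isClosed_subset (isClosed_compl_iff.mpr hso) ?_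
    intro x hx
    rw [mem_compl_iff] at hx
    rw [mem_preimage, mem_preimage, mem_Ici]
    by_contra hlt
    push_neg at hlt
    exact hx (hball ↑x (by rwa [(hD2 x).2]))
end
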